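/- For smooth functions g : ℝ → ℝ and f : ℝ → ℝ, the vector fields x_g = g ∂_x - g' ∂_u and z_f = f ∂_t + (1/6)(2x f' + y² f'') ∂_x + (2y/3) f' ∂_y + (1/6)(-4u f' - 2x f'' - y² f''') ∂_u on ℝ⁴ satisfy [x_g, z_f] = x_{(f'g/3 - f g')}, where x_q = q ∂_x - q' ∂_u. -/

import Mathlib

noncomputable section

abbrev P4 := ℝ × ℝ × ℝ × ℝ

def pdT (F : P4 → ℝ) (p : P4) : ℝ := deriv (fun s => F (s, p.2.1, p.2.2.1, p.2.2.2)) p.1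
def pdX (F : P4 → ℝ) (p : P4) : ℝ := deriv (fun s => F (p.1, s, p.2.2.1, p.2.2.2)) p.2.1
def pdY (F : P4 → ℝ) (p : P4) : ℝ := deriv (fun s => F (p.1, p.2.1, s, p.2.2.2)) p.2.2.1
def pdU (F : P4 → ℝ) (p : P4) : ℝ := deriv (fun s => F (p.1, p.2.1, p.2.2.1, s)) p.2.2.2

/-- The generator z_f of the ZK symmetry algebra, acting as a derivation. -/
def Zf (f : ℝ → ℝ) (F : P4 → ℝ) (p : P4) : ℝ :=
  f p.1 * pdT F p
  + (1 / 6) * (2 * p.2.1 * deriv f p.1 + p.2.2.1 ^ 2 * deriv (deriv f) p.1) * pdX F p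
  + (2 * p.2.2.1 / 3) * deriv f p.1 * pdY F p
  + (1 / 6) * (-4 * p.2.2.2 * deriv f p.1 - 2 * p.2.1 * deriv (deriv f) p.1
      - p.2.2.1 ^ 2 * deriv (deriv (deriv f)) p.1) * pdU F p

/-- The generator x_g = g ∂_x - g' ∂_u. -/
def Xg (g : ℝ → ℝ) (F : P4 → ℝ) (p : P4) : ℝ :=
  g p.1 * pdX F p - deriv g p.1 * pdU F p

/-- The generator y_h = (1/2) y h' ∂_x + h ∂_y - (1/2) y h'' ∂_u. -/
def Yh (h : ℝ → ℝ) (F : P4 → ℝ) (p : P4) : ℝ :=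
  (1 / 2) * p.2.2.1 * deriv h p.1 * pdX F p + h p.1 * pdY F p
  - (1 / 2) * p.2.2.1 * deriv (deriv h) p.1 * pdU F p

end

noncomputable section Stmt4Aux
open scoped ContDiff

lemma pdT_eq' (F : P4 → ℝ) (p : P4) (hF : DifferentiableAt ℝ F p) :
    pdT F p = fderiv ℝ F p (1, 0, 0, 0) := by
  have hγ : HasDerivAt (fun s : ℝ => ((s, p.2.1, p.2.2.1, p.2.2.2) : P4)) (1, 0, 0, 0) p.1 :=
    (hasDerivAt_id _).prodMk ((hasDerivAt_const _ _).prodMk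
      ((hasDerivAt_const _ _).prodMk (hasDerivAt_const _ _)))
  exact (hF.hasFDerivAt.comp_hasDerivAt p.1 hγ).deriv

lemma pdX_eq' (F : P4 → ℝ) (p : P4) (hF : DifferentiableAt ℝ F p) :
    pdX F p = fderiv ℝ F p (0, 1, 0, 0) := by
  have hγ : HasDerivAt (fun s : ℝ => ((p.1, s, p.2.2.1, p.2.2.2) : P4)) (0, 1, 0, 0) p.2.1 :=
    (hasDerivAt_const _ _).prodMk ((hasDerivAt_id _).prodMk
      ((hasDerivAt_const _ _).prodMk (hasDerivAt_const _ _)))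
  exact (hF.hasFDerivAt.comp_hasDerivAt p.2.1 hγ).deriv

lemma pdY_eq' (F : P4 → ℝ) (p : P4) (hF : DifferentiableAt ℝ F p) :
    pdY F p = fderiv ℝ F p (0, 0, 1, 0) := by
  have hγ : HasDerivAt (fun s : ℝ => ((p.1, p.2.1, s, p.2.2.2) : P4)) (0, 0, 1, 0) p.2.2.1 :=
    (hasDerivAt_const _ _).prodMk ((hasDerivAt_const _ _).prodMk
      ((hasDerivAt_id _).prodMk (hasDerivAt_const _ _)))
  exact (hF.hasFDerivAt.comp_hasDerivAt p.2.2.1 hγ).deriv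

lemma pdU_eq' (F : P4 → ℝ) (p : P4) (hF : DifferentiableAt ℝ F p) :
    pdU F p = fderiv ℝ F p (0, 0, 0, 1) := by
  have hγ : HasDerivAt (fun s : ℝ => ((p.1, p.2.1, p.2.2.1, s) : P4)) (0, 0, 0, 1) p.2.2.2 :=
    (hasDerivAt_const _ _).prodMk ((hasDerivAt_const _ _).prodMk
      ((hasDerivAt_const _ _).prodMk (hasDerivAt_id _)))
  exact (hF.hasFDerivAt.comp_hasDerivAt p.2.2.2 hγ).deriv

lemma fderiv_apply_eq' (F : P4 → ℝ) (p : P4) (hF : DifferentiableAt ℝ F p) (a b c d : ℝ) :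
    fderiv ℝ F p (a, b, c, d)
      = a * pdT F p + b * pdX F p + c * pdY F p + d * pdU F p := by
  rw [pdT_eq' F p hF, pdX_eq' F p hF, pdY_eq' F p hF, pdU_eq' F p hF]
  have h : ((a, b, c, d) : P4) = a • ((1,0,0,0) : P4) + b • (0,1,0,0) + c • (0,0,1,0)
      + d • (0,0,0,1) := by
    simp [Prod.ext_iff]
  rw [h, map_add, map_add, map_add, map_smul, map_smul, map_smul, map_smul]
  simp [smul_eq_mul]

/-- The vector of coefficients of `z_f`. -/
def zv (f : ℝ → ℝ) (p : P4) : P4 :=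
  (f p.1,
   1 / 6 * (2 * p.2.1 * deriv f p.1 + p.2.2.1 * p.2.2.1 * deriv (deriv f) p.1),
   2 / 3 * p.2.2.1 * deriv f p.1,
   1 / 6 * (-4 * p.2.2.2 * deriv f p.1 - 2 * p.2.1 * deriv (deriv f) p.1
     - p.2.2.1 * p.2.2.1 * deriv (deriv (deriv f)) p.1))

/-- The vector of coefficients of `x_g`. -/
def xv (g : ℝ → ℝ) (p : P4) : P4 := (0, g p.1, 0, -deriv g p.1)

def pt : P4 →L[ℝ] ℝ := ContinuousLinearMap.fst ℝ ℝ (ℝ × ℝ × ℝ)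
def px : P4 →L[ℝ] ℝ :=
  (ContinuousLinearMap.fst ℝ ℝ (ℝ × ℝ)).comp (ContinuousLinearMap.snd ℝ ℝ (ℝ × ℝ × ℝ))
def py : P4 →L[ℝ] ℝ :=
  (ContinuousLinearMap.fst ℝ ℝ ℝ).comp
    ((ContinuousLinearMap.snd ℝ ℝ (ℝ × ℝ)).comp (ContinuousLinearMap.snd ℝ ℝ (ℝ × ℝ × ℝ)))
def pu : P4 →L[ℝ] ℝ :=
  (ContinuousLinearMap.snd ℝ ℝ ℝ).comp
    ((ContinuousLinearMap.snd ℝ ℝ (ℝ × ℝ)).comp (ContinuousLinearMap.snd ℝ ℝ (ℝ × ℝ × ℝ)))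

@[simp] lemma pt_apply (w : P4) : pt w = w.1 := rfl
@[simp] lemma px_apply (w : P4) : px w = w.2.1 := rfl
@[simp] lemma py_apply (w : P4) : py w = w.2.2.1 := rfl
@[simp] lemma pu_apply (w : P4) : pu w = w.2.2.2 := rfl

lemma hasFDerivAt_coordT (h : ℝ → ℝ) (p : P4) (hh : DifferentiableAt ℝ h p.1) :
    HasFDerivAt (fun q : P4 => h q.1) (deriv h p.1 • pt) p :=
  HasDerivAt.comp_hasFDerivAt p hh.hasDerivAt pt.hasFDerivAt

lemma Zf_eq (f : ℝ → ℝ) (F : P4 → ℝ) (p : P4) (hF : DifferentiableAt ℝ F p) :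
    Zf f F p = fderiv ℝ F p (zv f p) := by
  have : fderiv ℝ F p (zv f p)
      = fderiv ℝ F p (f p.1,
        1 / 6 * (2 * p.2.1 * deriv f p.1 + p.2.2.1 * p.2.2.1 * deriv (deriv f) p.1),
        2 / 3 * p.2.2.1 * deriv f p.1,
        1 / 6 * (-4 * p.2.2.2 * deriv f p.1 - 2 * p.2.1 * deriv (deriv f) p.1
          - p.2.2.1 * p.2.2.1 * deriv (deriv (deriv f)) p.1)) := rfl
  rw [this, fderiv_apply_eq' F p hF]
  unfold Zf
  ring

lemma Xg_eq (g : ℝ → ℝ) (F : P4 → ℝ) (p : P4) (hF : DifferentiableAt ℝ F p) :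
    Xg g F p = fderiv ℝ F p (xv g p) := by
  have : fderiv ℝ F p (xv g p) = fderiv ℝ F p (0, g p.1, 0, -deriv g p.1) := rfl
  rw [this, fderiv_apply_eq' F p hF]
  unfold Xg
  ring

end Stmt4Aux

open scoped ContDiff

theorem stmt4 (g f : ℝ → ℝ) (hg : ContDiff ℝ (⊤ : ℕ∞) g) (hf : ContDiff ℝ (⊤ : ℕ∞) f) :
    ∀ F : P4 → ℝ, ContDiff ℝ (⊤ : ℕ∞) F → ∀ p : P4,
      Xg g (Zf f F) p - Zf f (Xg g F) p
        = Xg (fun t => deriv f t * g t / 3 - f t * deriv g t) F p := by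
  intro F hF p
  -- smoothness bookkeeping
  have hFi : ContDiff ℝ ∞ F := hF.of_le (by simp)
  have hFd : Differentiable ℝ F := hFi.differentiable (by simp)
  have hF'c : ContDiff ℝ ∞ (fun q => fderiv ℝ F q) := hFi.fderiv_right (by exact_mod_cast le_top)
  have hF'd : Differentiable ℝ (fun q => fderiv ℝ F q) :=
    hF'c.differentiable (by simp)
  have hgi : ContDiff ℝ ∞ g := hg.of_le (by simp)
  have hfi : ContDiff ℝ ∞ f := hf.of_le (by simp)
  have hg1 : Differentiable ℝ g := hgi.differentiable (by simp)
  have hdg : ContDiff ℝ ∞ (deriv g) := (contDiff_infty_iff_deriv.mp hgi).2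
  have hdg1 : Differentiable ℝ (deriv g) := hdg.differentiable (by simp)
  have hf1 : Differentiable ℝ f := hfi.differentiable (by simp)
  have hdf : ContDiff ℝ ∞ (deriv f) := (contDiff_infty_iff_deriv.mp hfi).2
  have hdf1 : Differentiable ℝ (deriv f) := hdf.differentiable (by simp)
  have hddf : ContDiff ℝ ∞ (deriv (deriv f)) := (contDiff_infty_iff_deriv.mp hdf).2
  have hddf1 : Differentiable ℝ (deriv (deriv f)) := hddf.differentiable (by simp)
  have hdddf1 : Differentiable ℝ (deriv (deriv (deriv f))) :=
    ((contDiff_infty_iff_deriv.mp hddf).2).differentiable (by simp)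
  -- derivatives of the coefficient vectors
  have hx2 := hasFDerivAt_coordT g p (hg1 p.1)
  have hx4 := (hasFDerivAt_coordT (deriv g) p (hdg1 p.1)).neg
  have hxv := ((hasFDerivAt_const (0:ℝ) p).prodMk (hx2.prodMk
    ((hasFDerivAt_const (0:ℝ) p).prodMk hx4)))
  have hxv' : HasFDerivAt (xv g) _ p := hxv
  have h1 := hasFDerivAt_coordT f p (hf1 p.1)
  have hdfq := hasFDerivAt_coordT (deriv f) p (hdf1 p.1)
  have hddfq := hasFDerivAt_coordT (deriv (deriv f)) p (hddf1 p.1)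
  have hdddfq := hasFDerivAt_coordT (deriv (deriv (deriv f))) p (hdddf1 p.1)
  have h2 := ((((px.hasFDerivAt (x := p)).const_mul 2).mul hdfq).add
      (((py.hasFDerivAt (x := p)).mul (py.hasFDerivAt (x := p))).mul hddfq)).const_mul (1/6 : ℝ)
  have h3 := ((py.hasFDerivAt (x := p)).const_mul (2/3)).mul hdfq
  have h4 := (((((pu.hasFDerivAt (x := p)).const_mul (-4)).mul hdfq).sub
      (((px.hasFDerivAt (x := p)).const_mul 2).mul hddfq)).sub
      (((py.hasFDerivAt (x := p)).mul (py.hasFDerivAt (x := p))).mul hdddfq)).const_mul (1/6 : ℝ)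
  have hzv := h1.prodMk (h2.prodMk (h3.prodMk h4))
  have hzv' : HasFDerivAt (zv f) _ p := hzv
  -- directional derivative computations
  have e1 : fderiv ℝ (zv f) p (xv g p) = (0, 1/3 * deriv f p.1 * g p.1, 0,
      2/3 * deriv f p.1 * deriv g p.1 - 1/3 * deriv (deriv f) p.1 * g p.1) := by
    rw [hzv'.fderiv]
    simp [xv, Prod.ext_iff]
    constructor
    · ring
    · ring
  have e2 : fderiv ℝ (xv g) p (zv f p) = (0, deriv g p.1 * f p.1, 0,
      -(deriv (deriv g) p.1 * f p.1)) := by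
    rw [hxv'.fderiv]
    simp [zv, Prod.ext_iff]
  -- rewrite the vector fields via fderiv
  have hZrw : Zf f F = fun q => fderiv ℝ F q (zv f q) :=
    funext fun q => Zf_eq f F q (hFd q)
  have hXrw : Xg g F = fun q => fderiv ℝ F q (xv g q) :=
    funext fun q => Xg_eq g F q (hFd q)
  have hG1d : DifferentiableAt ℝ (Zf f F) p := by
    rw [hZrw]; exact (hF'd p).clm_apply hzv'.differentiableAt
  have hG2d : DifferentiableAt ℝ (Xg g F) p := by
    rw [hXrw]; exact (hF'd p).clm_apply hxv'.differentiableAt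
  have key1 : Xg g (Zf f F) p
      = fderiv ℝ F p (fderiv ℝ (zv f) p (xv g p))
        + fderiv ℝ (fderiv ℝ F) p (xv g p) (zv f p) := by
    rw [Xg_eq _ _ p hG1d, hZrw,
      fderiv_clm_apply (hF'd p) hzv'.differentiableAt]
    simp
  have key2 : Zf f (Xg g F) p
      = fderiv ℝ F p (fderiv ℝ (xv g) p (zv f p))
        + fderiv ℝ (fderiv ℝ F) p (zv f p) (xv g p) := by
    rw [Zf_eq _ _ p hG2d, hXrw,
      fderiv_clm_apply (hF'd p) hxv'.differentiableAt]
    simp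
  have hsym : fderiv ℝ (fderiv ℝ F) p (xv g p) (zv f p)
      = fderiv ℝ (fderiv ℝ F) p (zv f p) (xv g p) :=
    hF.contDiffAt.isSymmSndFDerivAt (by rw [minSmoothness_of_isRCLikeNormedField]; exact WithTop.coe_le_coe.mpr le_top) _ _
  -- the derivative of the new coefficient function
  have hq : deriv (fun t => deriv f t * g t / 3 - f t * deriv g t) p.1
      = (deriv (deriv f) p.1 * g p.1 + deriv f p.1 * deriv g p.1) / 3
        - (deriv f p.1 * deriv g p.1 + f p.1 * deriv (deriv g) p.1) :=
    ((((hdf1 p.1).hasDerivAt.mul (hg1 p.1).hasDerivAt).div_const 3).sub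
      ((hf1 p.1).hasDerivAt.mul (hdg1 p.1).hasDerivAt)).deriv
  rw [key1, key2, hsym, e1, e2]
  rw [fderiv_apply_eq' F p (hFd p), fderiv_apply_eq' F p (hFd p)]
  unfold Xg
  rw [hq]
  ring
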